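/- arXiv:1804.07298 — 2 statements merged into one kernel-verified Lean document; each statement's English description precedes it below -/
import Mathlib

section
/- Let λ, μ, α, β, γc, ε be real numbers with μ > 0, α > 0, γc > 0, ε > 0, 3λ+2μ > 0 and 3β+2γc > 0. If 3×3 real matrices γ and χ satisfy W(γ,χ) = 0, where W is the Cosserat strain energy density, then γ = 0 and χ = 0; that is, under these strict parameter inequalities W is a positive definite quadratic form. -/
open Matrix BigOperators

/-- The Cosserat strain energy density. -/
noncomputable def cosseratW (mu al lam gc ep be : ℝ) (γ χ : Matrix (Fin 3) (Fin 3) ℝ) : ℝ :=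
  ((mu + al) / 2) * ∑ i, ∑ j, γ i j * γ i j
    + ((mu - al) / 2) * ∑ i, ∑ j, γ i j * γ j i
    + (lam / 2) * γ.trace ^ 2
    + ((gc + ep) / 2) * ∑ i, ∑ j, χ i j * χ i j
    + ((gc - ep) / 2) * ∑ i, ∑ j, χ i j * χ j i
    + (be / 2) * χ.trace ^ 2

/-!
`W` is the sum of two copies of one quadratic form `Q`, evaluated at `γ` and at `χ`. Splitting a
matrix `g` into its deviatoric symmetric, skew-symmetric and spherical parts diagonalises `Q`:
`Q g = μ ‖dev sym g‖² + α ‖skew g‖² + ((3λ + 2μ) / 6) (tr g)²`. Under the strict inequalities all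
three weights are positive, so `Q g = 0` forces the three parts, hence `g`, to vanish.
-/

noncomputable def cosseratForm (mu al lam : ℝ) (g : Matrix (Fin 3) (Fin 3) ℝ) : ℝ :=
  ((mu + al) / 2) * ∑ i, ∑ j, g i j * g i j
    + ((mu - al) / 2) * ∑ i, ∑ j, g i j * g j i
    + (lam / 2) * g.trace ^ 2

theorem cosseratW_eq_cosseratForm_add (mu al lam gc ep be : ℝ) (γ χ : Matrix (Fin 3) (Fin 3) ℝ) :
    cosseratW mu al lam gc ep be γ χ = cosseratForm mu al lam γ + cosseratForm gc ep be χ := by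
  simp only [cosseratW, cosseratForm]
  ring

theorem cosseratForm_eq_sum_sq (mu al lam : ℝ) (g : Matrix (Fin 3) (Fin 3) ℝ) :
    cosseratForm mu al lam g =
      mu / 2 * ((g 0 1 + g 1 0) ^ 2 + (g 0 2 + g 2 0) ^ 2 + (g 1 2 + g 2 1) ^ 2)
      + al / 2 * ((g 0 1 - g 1 0) ^ 2 + (g 0 2 - g 2 0) ^ 2 + (g 1 2 - g 2 1) ^ 2)
      + mu / 3 * ((g 0 0 - g 1 1) ^ 2 + (g 1 1 - g 2 2) ^ 2 + (g 2 2 - g 0 0) ^ 2)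
      + (3 * lam + 2 * mu) / 6 * (g 0 0 + g 1 1 + g 2 2) ^ 2 := by
  simp only [cosseratForm, trace, diag, Fin.sum_univ_three]
  ring

section

variable {mu al lam : ℝ}

theorem cosseratForm_nonneg (hmu : 0 < mu) (hal : 0 < al) (hlm : 0 < 3 * lam + 2 * mu)
    (g : Matrix (Fin 3) (Fin 3) ℝ) : 0 ≤ cosseratForm mu al lam g := by
  rw [cosseratForm_eq_sum_sq]
  positivity

theorem eq_zero_of_cosseratForm_eq_zero (hmu : 0 < mu) (hal : 0 < al)
    (hlm : 0 < 3 * lam + 2 * mu) {g : Matrix (Fin 3) (Fin 3) ℝ}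
    (h : cosseratForm mu al lam g = 0) : g = 0 := by
  rw [cosseratForm_eq_sum_sq] at h
  simp (disch := positivity) only [add_eq_zero_iff_of_nonneg, mul_eq_zero_iff_left,
    pow_eq_zero_iff] at h
  obtain ⟨⟨⟨⟨⟨s01, s02⟩, s12⟩, ⟨⟨a01, a02⟩, a12⟩⟩, ⟨⟨d01, d12⟩, -⟩⟩, htr⟩ := h
  ext i j
  fin_cases i <;> fin_cases j <;>
    simp only [Fin.zero_eta, Fin.mk_one, Fin.reduceFinMk, Fin.isValue, Matrix.zero_apply] <;>
    linarith

end

theorem stmt_8 (lam mu al be gc ep : ℝ) (hmu : 0 < mu) (hal : 0 < al) (hgc : 0 < gc)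
    (hep : 0 < ep) (hlm : 0 < 3 * lam + 2 * mu) (hbg : 0 < 3 * be + 2 * gc)
    (γ χ : Matrix (Fin 3) (Fin 3) ℝ)
    (h : cosseratW mu al lam gc ep be γ χ = 0) :
    γ = 0 ∧ χ = 0 := by
  rw [cosseratW_eq_cosseratForm_add, add_eq_zero_iff_of_nonneg (cosseratForm_nonneg hmu hal hlm γ)
    (cosseratForm_nonneg hgc hep hbg χ)] at h
  exact ⟨eq_zero_of_cosseratForm_eq_zero hmu hal hlm h.1,
    eq_zero_of_cosseratForm_eq_zero hgc hep hbg h.2⟩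
end

section
/- Let λ, μ, α, β, γc, ε be real numbers with μ ≠ 0, α ≠ 0, γc ≠ 0, ε ≠ 0, 3λ+2μ ≠ 0 and 3β+2γc ≠ 0, and set μ' = 1/(4μ), α' = 1/(4α), γc' = 1/(4γc), ε' = 1/(4ε), λ' = −λ/(6μ(λ+2μ/3)), β' = −β/(6γc(β+2γc/3)). For all 3×3 real matrices γ and χ, if σ = (μ+α)γ + (μ−α)γᵀ + λ(tr γ)I and m = (γc+ε)χ + (γc−ε)χᵀ + β(tr χ)I, then Φ(σ,m) = W(γ,χ), where W is the Cosserat strain energy density and Φ is the Cosserat stress energy density. -/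
open Matrix BigOperators

/-- The Cosserat stress energy density (same quadratic form with primed coefficients). -/
noncomputable def cosseratPhi (mu' al' lam' gc' ep' be' : ℝ)
    (σ m : Matrix (Fin 3) (Fin 3) ℝ) : ℝ :=
  ((mu' + al') / 2) * ∑ i, ∑ j, σ i j * σ i j
    + ((mu' - al') / 2) * ∑ i, ∑ j, σ i j * σ j i
    + (lam' / 2) * σ.trace ^ 2
    + ((gc' + ep') / 2) * ∑ i, ∑ j, m i j * m i j
    + ((gc' - ep') / 2) * ∑ i, ∑ j, m i j * m j i
    + (be' / 2) * m.trace ^ 2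

/-!
The constitutive law `C X = (a+b) X + (a-b) Xᵀ + c (tr X) 1` is self-adjoint for the Frobenius
pairing, and the energy with coefficients `a, b, c` is `⟪X, C X⟫ / 2`. On `n × n` matrices `C` acts as
`2a` on symmetric traceless, `2b` on skew and `n c + 2a` on scalar matrices, so the primed
coefficients are exactly those of `C⁻¹`. Hence the dual energy of `C γ` is
`⟪C γ, C⁻¹ C γ⟫ / 2 = ⟪γ, C γ⟫ / 2`.
-/

namespace Cosserat

variable {n : Type*} [Fintype n]

noncomputable def frobeniusPairing (X Y : Matrix n n ℝ) : ℝ := ∑ i, ∑ j, X i j * Y i j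

noncomputable def energy (a b c : ℝ) (X : Matrix n n ℝ) : ℝ :=
  ((a + b) / 2) * frobeniusPairing X X + ((a - b) / 2) * frobeniusPairing X Xᵀ
    + (c / 2) * X.trace ^ 2

lemma frobeniusPairing_comm (X Y : Matrix n n ℝ) :
    frobeniusPairing X Y = frobeniusPairing Y X := by
  simp only [frobeniusPairing, mul_comm]

lemma frobeniusPairing_transpose_right (X Y : Matrix n n ℝ) :
    frobeniusPairing X Yᵀ = frobeniusPairing Y Xᵀ := by
  simp only [frobeniusPairing, transpose_apply]
  rw [Finset.sum_comm]
  simp only [mul_comm]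

lemma frobeniusPairing_add_right (X Y Z : Matrix n n ℝ) :
    frobeniusPairing X (Y + Z) = frobeniusPairing X Y + frobeniusPairing X Z := by
  simp only [frobeniusPairing, Matrix.add_apply, mul_add, Finset.sum_add_distrib]

lemma frobeniusPairing_smul_right (r : ℝ) (X Y : Matrix n n ℝ) :
    frobeniusPairing X (r • Y) = r * frobeniusPairing X Y := by
  simp only [frobeniusPairing, Matrix.smul_apply, smul_eq_mul, Finset.mul_sum, mul_left_comm]

variable [DecidableEq n]

lemma frobeniusPairing_one_right (X : Matrix n n ℝ) : frobeniusPairing X 1 = X.trace := by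
  simp [frobeniusPairing, one_apply, trace]

noncomputable def constitutiveMap (a b c : ℝ) (X : Matrix n n ℝ) : Matrix n n ℝ :=
  (a + b) • X + (a - b) • Xᵀ + (c * X.trace) • (1 : Matrix n n ℝ)

lemma frobeniusPairing_constitutiveMap (a b c : ℝ) (X Y : Matrix n n ℝ) :
    frobeniusPairing X (constitutiveMap a b c Y)
      = (a + b) * frobeniusPairing X Y + (a - b) * frobeniusPairing X Yᵀ
        + c * Y.trace * X.trace := by
  simp only [constitutiveMap, frobeniusPairing_add_right, frobeniusPairing_smul_right,
    frobeniusPairing_one_right]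

lemma energy_eq_frobeniusPairing (a b c : ℝ) (X : Matrix n n ℝ) :
    energy a b c X = frobeniusPairing X (constitutiveMap a b c X) / 2 := by
  rw [frobeniusPairing_constitutiveMap, energy]
  ring

lemma frobeniusPairing_constitutiveMap_comm (a b c : ℝ) (X Y : Matrix n n ℝ) :
    frobeniusPairing X (constitutiveMap a b c Y) = frobeniusPairing (constitutiveMap a b c X) Y := by
  rw [frobeniusPairing_comm _ Y, frobeniusPairing_constitutiveMap,
    frobeniusPairing_constitutiveMap, frobeniusPairing_comm Y X, frobeniusPairing_transpose_right]
  ring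

lemma constitutiveMap_constitutiveMap {a b c a' b' c' : ℝ} (ha : 4 * a * a' = 1)
    (hb : 4 * b * b' = 1) (hc : 2 * a * (Fintype.card n * c + 2 * a) * c' = -c)
    (X : Matrix n n ℝ) :
    constitutiveMap a' b' c' (constitutiveMap a b c X) = X := by
  have ha₀ : a ≠ 0 := by rintro rfl; simp at ha
  have h_scalar : 2 * a' * c + c' * (2 * a + Fintype.card n * c) = 0 := by
    refine mul_right_injective₀ (mul_ne_zero two_ne_zero ha₀) ?_
    linear_combination c * ha + hc
  have h_trace : (constitutiveMap a b c X).trace = (2 * a + Fintype.card n * c) * X.trace := by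
    simp only [constitutiveMap, trace_add, trace_smul, trace_transpose, trace_one, smul_eq_mul]
    ring
  ext i j
  rw [constitutiveMap, h_trace]
  simp only [constitutiveMap, transpose_add, transpose_smul, transpose_transpose,
    transpose_one, Matrix.add_apply, Matrix.smul_apply, transpose_apply, smul_eq_mul]
  linear_combination (X i j + X j i) / 2 * ha + (X i j - X j i) / 2 * hb
    + X.trace * (1 : Matrix n n ℝ) i j * h_scalar

lemma energy_constitutiveMap {a b c a' b' c' : ℝ} (ha : 4 * a * a' = 1)
    (hb : 4 * b * b' = 1) (hc : 2 * a * (Fintype.card n * c + 2 * a) * c' = -c)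
    (X : Matrix n n ℝ) :
    energy a' b' c' (constitutiveMap a b c X) = energy a b c X := by
  rw [energy_eq_frobeniusPairing, constitutiveMap_constitutiveMap ha hb hc,
    energy_eq_frobeniusPairing, frobeniusPairing_constitutiveMap_comm, frobeniusPairing_comm]

end Cosserat

open Cosserat in
theorem stmt_9 (lam mu al be gc ep : ℝ) (hmu : mu ≠ 0) (hal : al ≠ 0) (hgc : gc ≠ 0)
    (hep : ep ≠ 0) (hlm : 3 * lam + 2 * mu ≠ 0) (hbg : 3 * be + 2 * gc ≠ 0)
    (mu' al' lam' gc' ep' be' : ℝ)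
    (hmu' : mu' = 1 / (4 * mu)) (hal' : al' = 1 / (4 * al))
    (hgc' : gc' = 1 / (4 * gc)) (hep' : ep' = 1 / (4 * ep))
    (hlam' : lam' = -lam / (6 * mu * (lam + 2 * mu / 3)))
    (hbe' : be' = -be / (6 * gc * (be + 2 * gc / 3)))
    (γ χ σ m : Matrix (Fin 3) (Fin 3) ℝ)
    (hσ : σ = (mu + al) • γ + (mu - al) • γᵀ + (lam * γ.trace) • (1 : Matrix (Fin 3) (Fin 3) ℝ))
    (hm : m = (gc + ep) • χ + (gc - ep) • χᵀ + (be * χ.trace) • (1 : Matrix (Fin 3) (Fin 3) ℝ)) :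
    cosseratPhi mu' al' lam' gc' ep' be' σ m = cosseratW mu al lam gc ep be γ χ := by
  have h_inv {x x' : ℝ} (hx : x ≠ 0) (hx' : x' = 1 / (4 * x)) : 4 * x * x' = 1 := by
    rw [hx']; field_simp
  have h_vol {l x l' : ℝ} (hx : x ≠ 0) (hlx : 3 * l + 2 * x ≠ 0)
      (hl' : l' = -l / (6 * x * (l + 2 * x / 3))) :
      2 * x * (Fintype.card (Fin 3) * l + 2 * x) * l' = -l := by
    rw [hl', Fintype.card_fin, Nat.cast_ofNat,
      show 6 * x * (l + 2 * x / 3) = 2 * x * (3 * l + 2 * x) by ring,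
      mul_div_cancel₀ _ (mul_ne_zero (mul_ne_zero two_ne_zero hx) hlx)]
  have h_split (a b c a₂ b₂ c₂ : ℝ) (X Y : Matrix (Fin 3) (Fin 3) ℝ) :
      cosseratW a b c a₂ b₂ c₂ X Y = energy a b c X + energy a₂ b₂ c₂ Y := by
    simp only [cosseratW, energy, frobeniusPairing, transpose_apply]
    ring
  change cosseratW mu' al' lam' gc' ep' be' σ m = _
  rw [h_split, h_split, show σ = constitutiveMap mu al lam γ from hσ,
    show m = constitutiveMap gc ep be χ from hm,
    energy_constitutiveMap (h_inv hmu hmu') (h_inv hal hal') (h_vol hmu hlm hlam'),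
    energy_constitutiveMap (h_inv hgc hgc') (h_inv hep hep') (h_vol hgc hbg hbe')]
end
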